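/- Global null-controllability: let λ ≤ -1, A = λ·id + E on ℓ², and ρ > 0. Then for every y₀ ∈ ℓ² there exist T > 0 and a control f ∈ L²([0,T], ℓ²) with ∫₀ᵀ ‖f(t)‖₂² dt ≤ ρ² such that the mild solution y(t) = e^{tA}y₀ + e^{tA}∫₀ᵗ e^{-sA} f(s) ds of ẏ = Ay + f, y(0) = y₀, satisfies y(T) = 0. -/

import Mathlib

open scoped ENNReal
open MeasureTheory Filter

noncomputable section

/-- The real Hilbert space `ℓ²` of square-summable real sequences. -/
abbrev ell2 : Type := lp (fun _ : ℕ => ℝ) 2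

lemma shift_memℓp (y : ell2) : Memℓp (fun n => y (n + 1)) 2 := by
  have h : Summable fun n : ℕ => ‖y n‖ ^ (2 : ℝ≥0∞).toReal :=
    (memℓp_gen_iff (by norm_num)).mp (lp.memℓp y)
  exact memℓp_gen (h.comp_injective (add_left_injective 1))

/-- The left shift operator `E : ℓ² → ℓ²`, `(Ey)ₙ = yₙ₊₁`. -/
def shiftE : ell2 →L[ℝ] ell2 :=
  LinearMap.mkContinuous
    { toFun := fun y => ⟨fun n => y (n + 1), shift_memℓp y⟩
      map_add' := fun y z => by
        ext n
        simp [lp.coeFn_add] <;> rfl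
      map_smul' := fun c y => by
        ext n
        simp [lp.coeFn_smul] }
    1
    (fun y => by
      rw [one_mul]
      have h2 : (0:ℝ) < (2 : ℝ≥0∞).toReal := by norm_num
      have hy := lp.norm_rpow_eq_tsum h2 y
      have hEy := lp.norm_rpow_eq_tsum h2 (⟨fun n => y (n + 1), shift_memℓp y⟩ : ell2)
      have hle : (∑' n : ℕ, ‖y (n + 1)‖ ^ (2 : ℝ≥0∞).toReal)
          ≤ ∑' n : ℕ, ‖y n‖ ^ (2 : ℝ≥0∞).toReal := by
        have hs : Summable fun n : ℕ => ‖y n‖ ^ (2 : ℝ≥0∞).toReal :=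
          (memℓp_gen_iff h2).mp (lp.memℓp y)
        exact tsum_comp_le_tsum_of_inj hs (fun n => by positivity)
          (add_left_injective 1)
      have key : ‖(⟨fun n => y (n + 1), shift_memℓp y⟩ : ell2)‖ ^ (2 : ℝ≥0∞).toReal
          ≤ ‖y‖ ^ (2 : ℝ≥0∞).toReal := by
        rw [hy, hEy]; exact hle
      exact (Real.rpow_le_rpow_iff
        (norm_nonneg ((⟨fun n => y (n + 1), shift_memℓp y⟩ : ell2))) (norm_nonneg y) h2).mp key)

/-- The operator `A = λ·id + E` on `ℓ²`. -/
def opA (lam : ℝ) : ell2 →L[ℝ] ell2 :=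
  lam • ContinuousLinearMap.id ℝ ell2 + shiftE

/-! The semigroup `e^{tA} = e^{λt} e^{tE}` is a contraction for `t ≥ 0`, since `‖E‖ ≤ 1` and
`λ ≤ -1`. The control `f(s) = -T⁻¹ e^{sA} y₀` makes `e^{-sA} f(s) = -T⁻¹ y₀` constant, so the
Duhamel integral over `[0, T]` is exactly `-y₀` and `y(T) = 0`; its energy is at most
`T · (‖y₀‖ / T)² = ‖y₀‖² / T`, which is `≤ ρ²` once `T` is large. -/

instance : Nontrivial ell2 :=
  ⟨lp.single 2 0 1, 0, fun h => by simpa using congrArg (· 0) h⟩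

lemma norm_shiftE_le : ‖shiftE‖ ≤ 1 :=
  LinearMap.mkContinuous_norm_le _ zero_le_one _

lemma opA_eq (lam : ℝ) : opA lam = lam • 1 + shiftE := rfl

namespace NormedSpace

variable {𝔸 : Type*} [NormedRing 𝔸] [NormedAlgebra ℝ 𝔸]

theorem norm_exp_le_exp_norm [NormOneClass 𝔸] (x : 𝔸) : ‖exp x‖ ≤ Real.exp ‖x‖ := by
  rw [exp_eq_tsum ℝ, Real.exp_eq_exp_ℝ, exp_eq_tsum_div]
  refine (norm_tsum_le_tsum_norm (norm_expSeries_summable' x)).trans <|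
    (norm_expSeries_summable' x).tsum_le_tsum (fun n => ?_) (Real.summable_pow_div_factorial ‖x‖)
  rw [norm_smul, norm_inv, RCLike.norm_natCast, div_eq_inv_mul]
  gcongr
  exact norm_pow_le x n

variable [CompleteSpace 𝔸]

theorem exp_smul_one_add (c : ℝ) (x : 𝔸) : exp (c • 1 + x) = Real.exp c • exp x := by
  -- the functional equation of `exp` is stated for normed `ℚ`-algebras
  let := NormedAlgebra.restrictScalars ℚ ℝ 𝔸
  rw [exp_add_of_commute ((Commute.one_left x).smul_left c), ← Algebra.algebraMap_eq_smul_one,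
    ← algebraMap_exp_comm, Algebra.algebraMap_eq_smul_one, Real.exp_eq_exp_ℝ, smul_one_mul]

theorem norm_exp_smul_smul_one_add_le [NormOneClass 𝔸] {t : ℝ} (ht : 0 ≤ t) (c : ℝ) (x : 𝔸) :
    ‖exp (t • (c • 1 + x))‖ ≤ Real.exp (t * (c + ‖x‖)) := by
  rw [smul_add, smul_smul, exp_smul_one_add, norm_smul, Real.norm_of_nonneg (Real.exp_pos _).le,
    mul_add, Real.exp_add]
  gcongr
  refine (norm_exp_le_exp_norm _).trans (Real.exp_le_exp.2 ?_)
  rw [norm_smul, Real.norm_of_nonneg ht]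

end NormedSpace

lemma norm_exp_smul_opA_le_one {lam t : ℝ} (hlam : lam ≤ -1) (ht : 0 ≤ t) :
    ‖NormedSpace.exp (t • opA lam)‖ ≤ 1 := by
  refine (opA_eq lam ▸ NormedSpace.norm_exp_smul_smul_one_add_le ht lam shiftE).trans ?_
  rw [Real.exp_le_one_iff]
  nlinarith [norm_shiftE_le]

section NullControl

open NormedSpace

variable {X : Type*} [NormedAddCommGroup X] [NormedSpace ℝ X]

def nullControl (A : X →L[ℝ] X) (T : ℝ) (y₀ : X) (s : ℝ) : X :=
  -T⁻¹ • exp (s • A) y₀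

lemma norm_nullControl_le {A : X →L[ℝ] X} {T t : ℝ} (hT : 0 ≤ T) (ht : ‖exp (t • A)‖ ≤ 1)
    (y₀ : X) : ‖nullControl A T y₀ t‖ ≤ T⁻¹ * ‖y₀‖ := by
  rw [nullControl, norm_smul, norm_neg, norm_inv, Real.norm_of_nonneg hT]
  gcongr
  exact (ContinuousLinearMap.le_opNorm _ _).trans (mul_le_of_le_one_left (norm_nonneg _) ht)

variable [CompleteSpace X]

lemma exp_neg_smul_apply_exp_smul_apply (A : X →L[ℝ] X) (s : ℝ) (y : X) :
    exp ((-s) • A) (exp (s • A) y) = y := by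
  let := NormedAlgebra.restrictScalars ℚ ℝ (X →L[ℝ] X)
  rw [← mul_apply_eq_comp, ← exp_add_of_commute ((Commute.refl A).smul_left _
    |>.smul_right _), neg_smul, neg_add_cancel, exp_zero, one_apply_eq_self]

lemma exp_smul_apply_add_integral_nullControl_eq_zero (A : X →L[ℝ] X) {T : ℝ} (hT : T ≠ 0)
    (y₀ : X) :
    exp (T • A) y₀ + exp (T • A) (∫ s in (0:ℝ)..T, exp ((-s) • A) (nullControl A T y₀ s)) = 0 := by
  simp only [nullControl, map_smul, exp_neg_smul_apply_exp_smul_apply,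
    intervalIntegral.integral_const, sub_zero, smul_smul, mul_neg, mul_inv_cancel₀ hT, neg_one_smul,
    map_neg, add_neg_cancel]

lemma continuous_nullControl (A : X →L[ℝ] X) (T : ℝ) (y₀ : X) :
    Continuous (nullControl A T y₀) := by
  let := NormedAlgebra.restrictScalars ℚ ℝ (X →L[ℝ] X)
  unfold nullControl
  fun_prop

lemma memLp_nullControl {A : X →L[ℝ] X} {T : ℝ} (hA : ∀ t ∈ Set.Icc 0 T, ‖exp (t • A)‖ ≤ 1)
    (y₀ : X) (p : ℝ≥0∞) : MemLp (nullControl A T y₀) p (volume.restrict (Set.Icc 0 T)) := by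
  refine MemLp.of_bound (continuous_nullControl A T y₀).aestronglyMeasurable (|T|⁻¹ * ‖y₀‖) <|
    (ae_restrict_iff' measurableSet_Icc).2 <| ae_of_all _ fun t ht => ?_
  have hT : 0 ≤ T := ht.1.trans ht.2
  simpa only [abs_of_nonneg hT] using norm_nullControl_le hT (hA t ht) y₀

lemma integral_norm_nullControl_sq_le {A : X →L[ℝ] X} {T : ℝ} (hT : 0 < T)
    (hA : ∀ t ∈ Set.Icc 0 T, ‖exp (t • A)‖ ≤ 1) (y₀ : X) :
    ∫ t in (0:ℝ)..T, ‖nullControl A T y₀ t‖ ^ 2 ≤ ‖y₀‖ ^ 2 / T := calc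
  _ ≤ ∫ _ in (0:ℝ)..T, (T⁻¹ * ‖y₀‖) ^ 2 := by
    refine intervalIntegral.integral_mono_on hT.le
      (((continuous_nullControl A T y₀).norm.pow 2).intervalIntegrable _ _)
      intervalIntegrable_const fun t ht => ?_
    gcongr
    exact norm_nullControl_le hT.le (hA t ht) y₀
  _ = ‖y₀‖ ^ 2 / T := by
    rw [intervalIntegral.integral_const, sub_zero, smul_eq_mul]
    field_simp

end NullControl

/-- Global null-controllability for `λ ≤ -1`: for every `ρ > 0` and every `y₀ ∈ ℓ²` the
system `ẏ = Ay + f` can be steered to `0` in some time `T > 0` by an admissible control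
`f ∈ L²([0,T], ℓ²)` with `∫₀^T ‖f‖₂² dt ≤ ρ²`. -/
theorem stmt17 (lam ρ : ℝ) (hlam : lam ≤ -1) (hρ : 0 < ρ) (y0 : ell2) :
    ∃ (T : ℝ) (f : ℝ → ell2), 0 < T ∧
      MemLp f 2 (volume.restrict (Set.Icc (0:ℝ) T)) ∧
      (∫ t in (0:ℝ)..T, ‖f t‖ ^ 2) ≤ ρ ^ 2 ∧
      NormedSpace.exp (T • opA lam) y0 +
        NormedSpace.exp (T • opA lam)
          (∫ s in (0:ℝ)..T, NormedSpace.exp ((-s) • opA lam) (f s)) = 0 := by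
  set T := ‖y0‖ ^ 2 / ρ ^ 2 + 1
  have hT : 0 < T := by positivity
  have hA : ∀ t ∈ Set.Icc 0 T, ‖NormedSpace.exp (t • opA lam)‖ ≤ 1 :=
    fun t ht => norm_exp_smul_opA_le_one hlam ht.1
  refine ⟨T, nullControl (opA lam) T y0, hT, memLp_nullControl hA y0 2, ?_,
    exp_smul_apply_add_integral_nullControl_eq_zero (opA lam) hT.ne' y0⟩
  calc _ ≤ ‖y0‖ ^ 2 / T := integral_norm_nullControl_sq_le hT hA y0
    _ ≤ ρ ^ 2 := by
      rw [div_le_iff₀ hT]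
      have : ρ ^ 2 * T = ‖y0‖ ^ 2 + ρ ^ 2 := by simp only [T]; field_simp
      nlinarith

end
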